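/- arXiv:math/0211139 — 3 statements merged into one kernel-verified Lean document; each statement's English description precedes it below -/
import Mathlib

section
/- Let G be a group whose center is trivial, generated by a family of elements {t_α : α ∈ A}, and suppose there is an action of G on A such that g t_α g⁻¹ ∈ {t_{g·α}, t_{g·α}⁻¹} for all g ∈ G, α ∈ A, and such that t_α^i = t_β^j with i,j ≠ 0 implies α = β. Let K ≤ G and f : K → G a homomorphism. If there is N ≠ 0 such that for every α ∈ A there is Q ≠ 0 with f(t_α^N) = t_α^Q, then every k ∈ K satisfies k·α = f(k)·α for all α ∈ A, and hence k⁻¹f(k) lies in the kernel of the action; if the action is faithful modulo center, f is the identity on K. -/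
/-- Abstract version of Ivanov's trick (Lemma 5.8): in a centerless group `G`
generated by "twists" `t α` whose conjugates satisfy
`g * t α * g⁻¹ ∈ {t (g • α), (t (g • α))⁻¹}` and whose nonzero powers
distinguish indices, any homomorphism `f : K → G` on a subgroup `K` sending
some fixed power of each twist to a power of the same twist satisfies
`k • α = f k • α` for all `k`, `α`; hence `k⁻¹ * f k` acts trivially, and if
the action is faithful modulo the (trivial) center, `f` is the identity. -/
theorem ivanov_trick {G : Type*} [Group G] {A : Type*} [MulAction G A]
    (t : A → G)
    (hcenter : Subgroup.center G = ⊥)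
    (hgen : Subgroup.closure (Set.range t) = ⊤)
    (hconj : ∀ (g : G) (α : A),
      g * t α * g⁻¹ = t (g • α) ∨ g * t α * g⁻¹ = (t (g • α))⁻¹)
    (hinj : ∀ α β (i j : ℤ), i ≠ 0 → j ≠ 0 → t α ^ i = t β ^ j → α = β)
    (hfaithful : ∀ g : G, (∀ α : A, g • α = α) → g ∈ Subgroup.center G)
    (K : Subgroup G) (f : K →* G)
    (N : ℤ) (hN : N ≠ 0)
    (hf : ∀ α : A, ∃ Q : ℤ, Q ≠ 0 ∧ ∃ h : t α ^ N ∈ K, f ⟨t α ^ N, h⟩ = t α ^ Q) :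
    (∀ (k : K) (α : A), (k : G) • α = f k • α) ∧ (∀ k : K, f k = (k : G)) := by
  have hc : ∀ (g : G) (α : A) (m : ℤ), ∃ ε : ℤ, (ε = 1 ∨ ε = -1) ∧
      g * t α ^ m * g⁻¹ = t (g • α) ^ (ε * m) := by
    intro g α m
    rcases hconj g α with h1 | h1
    · refine ⟨1, Or.inl rfl, ?_⟩
      rw [one_mul, ← h1, conj_zpow]
    · refine ⟨-1, Or.inr rfl, ?_⟩
      rw [show t (g • α) ^ (-1 * m) = ((t (g • α))⁻¹ : G) ^ m by group, ← h1, conj_zpow]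
  have key : ∀ (k : K) (α : A), (k : G) • α = f k • α := by
    intro k α
    obtain ⟨Q, hQ, h, hfα⟩ := hf α
    obtain ⟨Q', hQ', h', hfα'⟩ := hf ((k : G) • α)
    obtain ⟨ε₁, hε₁, h1⟩ := hc (k : G) α N
    obtain ⟨ε₂, hε₂, h2⟩ := hc (f k) α Q
    have hε₁0 : ε₁ ≠ 0 := by rcases hε₁ with h | h <;> simp [h]
    have hε₂0 : ε₂ ≠ 0 := by rcases hε₂ with h | h <;> simp [h]
    have hxK : (k : G) * t α ^ N * (k : G)⁻¹ ∈ K :=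
      mul_mem (mul_mem k.2 h) (inv_mem k.2)
    have he : (⟨(k : G) * t α ^ N * (k : G)⁻¹, hxK⟩ : K)
        = (⟨t ((k : G) • α) ^ N, h'⟩ : K) ^ ε₁ := by
      ext
      rw [SubgroupClass.coe_zpow]
      simp only [h1]
      rw [← zpow_mul, mul_comm]
    have hk : (⟨(k : G) * t α ^ N * (k : G)⁻¹, hxK⟩ : K)
        = k * (⟨t α ^ N, h⟩ : K) * k⁻¹ := rfl
    have main : t ((k : G) • α) ^ (Q' * ε₁) = t (f k • α) ^ (ε₂ * Q) := by
      have e1 : f (⟨(k : G) * t α ^ N * (k : G)⁻¹, hxK⟩ : K)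
          = t ((k : G) • α) ^ (Q' * ε₁) := by
        rw [he, map_zpow, hfα', ← zpow_mul]
      have e2 : f (⟨(k : G) * t α ^ N * (k : G)⁻¹, hxK⟩ : K)
          = t (f k • α) ^ (ε₂ * Q) := by
        rw [hk, map_mul, map_mul, map_inv, hfα, h2]
      rw [← e1, e2]
    exact hinj _ _ _ _ (mul_ne_zero hQ' hε₁0) (mul_ne_zero hε₂0 hQ) main
  refine ⟨key, fun k => ?_⟩
  have hfix : ∀ α : A, ((k : G)⁻¹ * f k) • α = α := by
    intro α
    rw [mul_smul, ← key k α, inv_smul_smul]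
  have := hfaithful _ hfix
  rw [hcenter, Subgroup.mem_bot] at this
  have : f k = (k : G) := by
    have := congrArg (fun x => (k : G) * x) this
    simpa [mul_assoc] using this
  exact this
end

section
/- Let G be a group with trivial center generated by elements {t_α : α ∈ A} satisfying g t_α g⁻¹ ∈ {t_{g·α}^{±1}} and the injectivity property t_α^i = t_β^j (i,j ≠ 0) ⟹ α = β. Suppose g : G → G is an automorphism, h : G → G an injective homomorphism, and there exists N ≠ 0 such that for every α ∈ A there exists Q ≠ 0 with h(t_α^N) = g(t_α^Q). Then g = h. -/
/-- Corollary 5.10 abstracted: in a centerless group `G` generated by twists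
`t α` with the conjugation and power-injectivity properties, if `g` is an
automorphism and `h` an injective endomorphism with `h (t α ^ N) = g (t α ^ Q)`
for suitable nonzero exponents, then `g = h`. -/
theorem auto_eq_of_agree_on_twist_powers {G : Type*} [Group G] {A : Type*}
    [MulAction G A] (t : A → G)
    (hcenter : Subgroup.center G = ⊥)
    (hgen : Subgroup.closure (Set.range t) = ⊤)
    (hconj : ∀ (g : G) (α : A),
      g * t α * g⁻¹ = t (g • α) ∨ g * t α * g⁻¹ = (t (g • α))⁻¹)
    (hinj : ∀ α β (i j : ℤ), i ≠ 0 → j ≠ 0 → t α ^ i = t β ^ j → α = β)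
    (hfaithful : ∀ x : G, (∀ α : A, x • α = α) → x ∈ Subgroup.center G)
    (g : G ≃* G) (h : G →* G) (hh : Function.Injective h)
    (N : ℤ) (hN : N ≠ 0)
    (hagree : ∀ α : A, ∃ Q : ℤ, Q ≠ 0 ∧ h (t α ^ N) = g (t α ^ Q)) :
    ∀ x : G, g x = h x := by
  choose Q hQ0 hQ using hagree
  set f : G →* G := g.symm.toMonoidHom.comp h with hfdef
  have hfQ : ∀ α, f (t α ^ N) = t α ^ Q α := fun α => by
    simp [hfdef, hQ α]
  have hsgn : ∀ (x : G) (α : A), ∃ ε : ℤ, ε ≠ 0 ∧ x * t α * x⁻¹ = t (x • α) ^ ε := by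
    intro x α
    rcases hconj x α with hc | hc
    · exact ⟨1, one_ne_zero, by simpa using hc⟩
    · exact ⟨-1, by norm_num, by simpa using hc⟩
  have key : ∀ (x : G) (α : A), f x • α = x • α := by
    intro x α
    obtain ⟨ε₁, hε₁, h1⟩ := hsgn x α
    obtain ⟨ε₂, hε₂, h2⟩ := hsgn (f x) α
    have e1 : x * t α ^ N * x⁻¹ = t (x • α) ^ (ε₁ * N) := by
      rw [← conj_zpow, h1, ← zpow_mul]
    have e2 : f x * t α ^ Q α * (f x)⁻¹ = t (f x • α) ^ (ε₂ * Q α) := by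
      rw [← conj_zpow, h2, ← zpow_mul]
    have e3 : f (x * t α ^ N * x⁻¹) = t (f x • α) ^ (ε₂ * Q α) := by
      rw [map_mul, map_mul, map_inv, hfQ, e2]
    have e4 : f (x * t α ^ N * x⁻¹) = t (x • α) ^ (ε₁ * Q (x • α)) := by
      rw [e1, mul_comm, zpow_mul, map_zpow, hfQ, ← zpow_mul, mul_comm]
    exact (hinj _ _ _ _ (mul_ne_zero hε₁ (hQ0 _)) (mul_ne_zero hε₂ (hQ0 _))
      (e4.symm.trans e3)).symm
  intro x
  have h1 : ∀ α : A, ((f x)⁻¹ * x) • α = α := by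
    intro α
    rw [mul_smul (f x)⁻¹ x α, ← key x α, inv_smul_smul]
  have h2 := hfaithful _ h1
  rw [hcenter, Subgroup.mem_bot] at h2
  have h3 : f x = x := inv_mul_eq_one.mp h2
  have h4 : g.symm (h x) = x := by simpa [hfdef] using h3
  conv_lhs => rw [← h4]
  exact g.apply_symm_apply _
end

section
/- Let A be a set with a symmetric function i : A → A → ℕ, and suppose T : A → G maps into a group G such that for nonzero integers m,n: T(α)^m T(β)^n = T(β)^n T(α)^m iff i(α,β) = 0. Let K ≤ G, f : K → G injective, and suppose there is N ≠ 0 with T(α)^N ∈ K for all α, and a map f_* : A → A with exponents P(α) ≠ 0 such that f(T(α)^N) = T(f_*(α))^{P(α)}. Then for all α, β: i(α,β) = 0 if and only if i(f_*(α), f_*(β)) = 0. -/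
/-- Abstract Lemma 5.11: if commutation of nonzero powers of twists `T α`
detects vanishing of a symmetric intersection number `i`, and an injective
homomorphism `f` on a subgroup `K` satisfies `f (T α ^ N) = T (f⋆ α) ^ P α`,
then `f⋆` preserves and reflects disjointness. -/
theorem induced_map_preserves_disjointness {A : Type*} {G : Type*} [Group G]
    (i : A → A → ℕ) (hsymm : ∀ α β, i α β = i β α)
    (T : A → G)
    (hcomm : ∀ α β (m n : ℤ), m ≠ 0 → n ≠ 0 →
      (T α ^ m * T β ^ n = T β ^ n * T α ^ m ↔ i α β = 0))
    (K : Subgroup G) (f : K →* G) (hf : Function.Injective f)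
    (N : ℤ) (hN : N ≠ 0) (hmem : ∀ α : A, T α ^ N ∈ K)
    (fstar : A → A) (P : A → ℤ) (hP : ∀ α, P α ≠ 0)
    (hind : ∀ α : A, f ⟨T α ^ N, hmem α⟩ = T (fstar α) ^ P α) :
    ∀ α β : A, i α β = 0 ↔ i (fstar α) (fstar β) = 0 := by
  intro α β
  have key : (T α ^ N * T β ^ N = T β ^ N * T α ^ N) ↔
      (T (fstar α) ^ P α * T (fstar β) ^ P β
        = T (fstar β) ^ P β * T (fstar α) ^ P α) := by
    constructor
    · intro h
      rw [← hind α, ← hind β, ← map_mul, ← map_mul]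
      congr 1
      ext
      exact h
    · intro h
      have : f (⟨T α ^ N, hmem α⟩ * ⟨T β ^ N, hmem β⟩)
          = f (⟨T β ^ N, hmem β⟩ * ⟨T α ^ N, hmem α⟩) := by
        rw [map_mul, map_mul, hind α, hind β, h]
      have := hf this
      exact congrArg Subtype.val this
  rw [← hcomm α β N N hN hN, ← hcomm (fstar α) (fstar β) (P α) (P β) (hP α) (hP β)]
  exact key
end
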